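/- arXiv:2410.03833 — 3 statements merged into one kernel-verified Lean document; each statement's English description precedes it below -/
import Mathlib

section
/- Naive fine-tuning returns the pretrained model under distinct features: w_t = w_o, i.e., the unlearned model obtained by fine-tuning on a subset of the remaining data is exactly equal to the pretrained model, so fine-tuning removes no information about the forgetting data. -/
/-!
The retained data never see the forgetting coordinates, so `X_rᵀ w_*^f = 0`; and `P` fixes the
columns of `X`, among them those of `X_r`. Hence the pretrained model already interpolates the
retained labels, `X_rᵀ w_o = X_rᵀ w_*^r`. The columns of `X_t` are combinations of those of `X_r`,
so `X_tᵀ (w_o - w_*^r) = 0` as well, and the fine-tuning correction `P_t (w_*^r - w_o)` vanishes.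
-/

open Matrix

namespace Matrix

variable {K m n p n₁ n₂ : Type*} [CommRing K] [Fintype m]

/-- The orthogonal projection onto the column span of `X`, provided `Xᵀ * X` is invertible. -/
noncomputable def colProj [Fintype n] [DecidableEq n] (X : Matrix m n K) : Matrix m m K :=
  X * (Xᵀ * X)⁻¹ * Xᵀ

lemma transpose_colProj [Fintype n] [DecidableEq n] (X : Matrix m n K) :
    (colProj X)ᵀ = colProj X := by
  rw [colProj, transpose_mul, transpose_mul, transpose_transpose, transpose_nonsing_inv,
    transpose_mul, transpose_transpose, Matrix.mul_assoc]

lemma colProj_mul_self [Fintype n] [DecidableEq n] {X : Matrix m n K} (hX : IsUnit (Xᵀ * X)) :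
    colProj X * X = X := by
  rw [colProj, Matrix.mul_assoc, Matrix.mul_assoc,
    nonsing_inv_mul _ ((isUnit_iff_isUnit_det _).mp hX), Matrix.mul_one]

lemma colProj_mulVec_congr [Fintype n] [DecidableEq n] {X : Matrix m n K} {v w : m → K}
    (h : Xᵀ *ᵥ v = Xᵀ *ᵥ w) : colProj X *ᵥ v = colProj X *ᵥ w := by
  simp only [colProj, ← mulVec_mulVec, h]

lemma colProj_mul_mul [Fintype n] [DecidableEq n] {X : Matrix m n K} (hX : IsUnit (Xᵀ * X))
    (C : Matrix n p K) : colProj X * (X * C) = X * C := by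
  rw [← Matrix.mul_assoc, colProj_mul_self hX]

lemma transpose_fromRows_zero_mulVec_eq_zero {m₁ m₂ : Type*} [Fintype m₁] [Fintype m₂]
    (A : Matrix m₁ n K) {w : m₁ ⊕ m₂ → K} (hw : ∀ i, w (Sum.inl i) = 0) :
    (fromRows A (0 : Matrix m₂ n K))ᵀ *ᵥ w = 0 := by
  have hw' : w ∘ Sum.inl = 0 := funext hw
  rw [transpose_fromRows, fromCols_mulVec, hw', mulVec_zero, transpose_zero, zero_mulVec,
    add_zero]

variable [Fintype n₁] [Fintype n₂] [DecidableEq n₁] [DecidableEq n₂]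

lemma colProj_fromCols_mul_left {Y : Matrix m n₁ K} {Z : Matrix m n₂ K}
    (hX : IsUnit ((fromCols Y Z)ᵀ * fromCols Y Z)) : colProj (fromCols Y Z) * Y = Y := by
  have hY : fromCols Y Z * fromRows (1 : Matrix n₁ n₁ K) (0 : Matrix n₂ n₁ K) = Y := by
    rw [fromCols_mul_fromRows, Matrix.mul_one, Matrix.mul_zero, add_zero]
  simpa only [hY] using colProj_mul_mul hX (fromRows (1 : Matrix n₁ n₁ K) (0 : Matrix n₂ n₁ K))

lemma transpose_mulVec_colProj_fromCols {Y : Matrix m n₁ K} {Z : Matrix m n₂ K}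
    (hX : IsUnit ((fromCols Y Z)ᵀ * fromCols Y Z)) (w : m → K) :
    Yᵀ *ᵥ (colProj (fromCols Y Z) *ᵥ w) = Yᵀ *ᵥ w := by
  rw [mulVec_mulVec, ← transpose_colProj, ← transpose_mul, colProj_fromCols_mul_left hX]

end Matrix

theorem finetuned_equals_pretrained_distinct_general
    (d_r d_f n_r n_f n_t : ℕ)
    (R : Matrix (Fin d_r) (Fin n_r) ℝ)
    (X_r : Matrix (Fin d_r ⊕ Fin d_f) (Fin n_r) ℝ) (hXr : X_r = Matrix.fromRows R 0)
    (X_f : Matrix (Fin d_r ⊕ Fin d_f) (Fin n_f) ℝ)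
    (X : Matrix (Fin d_r ⊕ Fin d_f) (Fin n_r ⊕ Fin n_f) ℝ) (hX : X = Matrix.fromCols X_r X_f)
    (hXinv : IsUnit (Xᵀ * X))
    (wr wf : Fin d_r ⊕ Fin d_f → ℝ)
    (hwf : ∀ i, wf (Sum.inl i) = 0)
    (wstar : Fin d_r ⊕ Fin d_f → ℝ) (hws : wstar = wr + wf)
    (S : Matrix (Fin n_r) (Fin n_t) ℝ)
    (X_t : Matrix (Fin d_r ⊕ Fin d_f) (Fin n_t) ℝ) (hXt : X_t = X_r * S)
    (P P_t : Matrix (Fin d_r ⊕ Fin d_f) (Fin d_r ⊕ Fin d_f) ℝ)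
    (hP : P = X * (Xᵀ * X)⁻¹ * Xᵀ)
    (hPt : P_t = X_t * (X_tᵀ * X_t)⁻¹ * X_tᵀ)
    (w_o w_t : Fin d_r ⊕ Fin d_f → ℝ)
    (hwo : w_o = P *ᵥ wstar)
    (hwt : w_t = (1 - P_t) *ᵥ w_o + P_t *ᵥ wr) :
    w_t = w_o := by
  have hP' : P = colProj X := hP
  have hPt' : P_t = colProj X_t := hPt
  have h_forget_unseen : X_rᵀ *ᵥ wf = 0 := hXr ▸ transpose_fromRows_zero_mulVec_eq_zero R hwf
  have h_retain_fit : X_rᵀ *ᵥ w_o = X_rᵀ *ᵥ wr := by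
    rw [hwo, hP', hX, transpose_mulVec_colProj_fromCols (hX ▸ hXinv), hws, mulVec_add,
      h_forget_unseen, add_zero]
  have h_finetune_fit : X_tᵀ *ᵥ w_o = X_tᵀ *ᵥ wr := by
    rw [hXt, transpose_mul, ← mulVec_mulVec, h_retain_fit, mulVec_mulVec]
  rw [hwt, sub_mulVec, one_mulVec, hPt', colProj_mulVec_congr h_finetune_fit, sub_add_cancel]

/-- finetuned_equals_pretrained_distinct -/
theorem finetuned_equals_pretrained_distinct
    (d_r d_f n_r n_f n_t : ℕ)
    (hd_r : 0 < d_r) (hd_f : 0 < d_f) (hn_r : 0 < n_r) (hn_f : 0 < n_f) (hn_t : 0 < n_t)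
    (R : Matrix (Fin d_r) (Fin n_r) ℝ) (F : Matrix (Fin d_f) (Fin n_f) ℝ)
    (hR : IsUnit (Rᵀ * R)) (hF : IsUnit (Fᵀ * F))
    (X_r : Matrix (Fin d_r ⊕ Fin d_f) (Fin n_r) ℝ) (hXr : X_r = Matrix.fromRows R 0)
    (X_f : Matrix (Fin d_r ⊕ Fin d_f) (Fin n_f) ℝ) (hXf : X_f = Matrix.fromRows 0 F)
    (X : Matrix (Fin d_r ⊕ Fin d_f) (Fin n_r ⊕ Fin n_f) ℝ) (hX : X = Matrix.fromCols X_r X_f)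
    (hXinv : IsUnit (Xᵀ * X))
    (wr wf : Fin d_r ⊕ Fin d_f → ℝ)
    (hwr : ∀ i, wr (Sum.inr i) = 0) (hwf : ∀ i, wf (Sum.inl i) = 0)
    (wstar : Fin d_r ⊕ Fin d_f → ℝ) (hws : wstar = wr + wf)
    (y_r : Fin n_r → ℝ) (hyr : y_r = X_rᵀ *ᵥ wstar)
    (y_f : Fin n_f → ℝ) (hyf : y_f = X_fᵀ *ᵥ wstar)
    (S : Matrix (Fin n_r) (Fin n_t) ℝ)
    (X_t : Matrix (Fin d_r ⊕ Fin d_f) (Fin n_t) ℝ) (hXt : X_t = X_r * S)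
    (hXtinv : IsUnit (X_tᵀ * X_t))
    (P P_r P_t : Matrix (Fin d_r ⊕ Fin d_f) (Fin d_r ⊕ Fin d_f) ℝ)
    (hP : P = X * (Xᵀ * X)⁻¹ * Xᵀ)
    (hPr : P_r = X_r * (X_rᵀ * X_r)⁻¹ * X_rᵀ)
    (hPt : P_t = X_t * (X_tᵀ * X_t)⁻¹ * X_tᵀ)
    (w_o w_t w_g : Fin d_r ⊕ Fin d_f → ℝ)
    (hwo : w_o = P *ᵥ wstar)
    (hwt : w_t = (1 - P_t) *ᵥ w_o + P_t *ᵥ wr)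
    (hwg : w_g = P_r *ᵥ wr) :
    w_t = w_o :=
  finetuned_equals_pretrained_distinct_general d_r d_f n_r n_f n_t R X_r hXr X_f X hX hXinv wr wf
    hwf wstar hws S X_t hXt P P_t hP hPt w_o w_t hwo hwt
end

section
/- Theorem 4.1, distinct-features scenario, unlearning loss: after removing the forgetting-feature components from the pretrained model, the regularized fine-tuned model ŵ_t satisfies L(ŵ_t, D_f) = ‖w_*^f‖²_{(1/n_f)·X_f X_fᵀ} = (1/n_f)·(w_*^f)ᵀ X_f X_fᵀ w_*^f, matching the unlearning loss of the golden model. -/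
/-!
The retained and forgetting data live on disjoint coordinates, so `X_fᵀ X_r = 0` and
`X_fᵀ w_*^r = 0`. Fine-tuning only moves the model inside the column space of `X_t = X_r S`,
which `X_fᵀ` annihilates, so the forgetting-set predictions of `ŵ_t` are those of `ŵ_o = P w_*^r`.
Since the columns of `X_f` lie in the column space of `X`, on which `P` is the identity, these
equal `X_fᵀ w_*^r = 0`. The residual on the forgetting set is therefore `-X_fᵀ w_*^f`.
-/

open Matrix

namespace Matrix

variable {m n k d_r d_f : Type*} {α : Type*}

theorem transpose_mul_projection [Fintype m] [Fintype n] [DecidableEq n] [CommRing α]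
    {X : Matrix m n α} (hX : IsUnit (Xᵀ * X)) :
    Xᵀ * (X * (Xᵀ * X)⁻¹ * Xᵀ) = Xᵀ := by
  have hdet : IsUnit (Xᵀ * X).det := (isUnit_iff_isUnit_det _).mp hX
  rw [← Matrix.mul_assoc, ← Matrix.mul_assoc, mul_nonsing_inv _ hdet, Matrix.one_mul]

theorem transpose_mul_projection_of_eq_mul [Fintype m] [Fintype n] [DecidableEq n] [CommRing α]
    {X : Matrix m n α} (hX : IsUnit (Xᵀ * X)) {A : Matrix m k α} {E : Matrix n k α}
    (hA : A = X * E) : Aᵀ * (X * (Xᵀ * X)⁻¹ * Xᵀ) = Aᵀ := by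
  rw [hA, transpose_mul, Matrix.mul_assoc, transpose_mul_projection hX]

theorem transpose_mul_mul_mul_transpose_eq_zero [Fintype m] [Fintype n] [NonUnitalSemiring α]
    {A : Matrix m k α} {B : Matrix m n α} (hAB : Aᵀ * B = 0) (M : Matrix n n α) :
    Aᵀ * (B * M * Bᵀ) = 0 := by
  rw [← Matrix.mul_assoc, ← Matrix.mul_assoc, hAB, Matrix.zero_mul, Matrix.zero_mul]

theorem mulVec_transpose_dotProduct_self [Fintype m] [Fintype n] [CommSemiring α]
    (A : Matrix m n α) (w : m → α) :
    (Aᵀ *ᵥ w) ⬝ᵥ (Aᵀ *ᵥ w) = w ⬝ᵥ ((A * Aᵀ) *ᵥ w) := by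
  rw [← mulVec_mulVec, dotProduct_mulVec, vecMul_transpose, dotProduct_comm]

theorem transpose_mulVec_regularized_finetune [Fintype m] [DecidableEq m] [Fintype n]
    [Ring α] {A : Matrix m n α} {P P_t : Matrix m m α}
    (hP : Aᵀ * P = Aᵀ) (hPt : Aᵀ * P_t = 0) (w v : m → α) :
    Aᵀ *ᵥ ((1 - P_t) *ᵥ (P *ᵥ w) + P_t *ᵥ v) = Aᵀ *ᵥ w := by
  rw [mulVec_add, mulVec_mulVec, mulVec_mulVec, mulVec_mulVec, Matrix.mul_sub, Matrix.mul_one,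
    hPt, sub_zero, hP, zero_mulVec, add_zero]

theorem transpose_fromRows_zero_mul_fromRows_zero [Fintype d_r] [Fintype d_f] [Semiring α]
    (R : Matrix d_r n α) (F : Matrix d_f k α) :
    (fromRows (0 : Matrix d_r k α) F)ᵀ * fromRows R (0 : Matrix d_f n α) = 0 := by
  rw [transpose_fromRows, fromCols_mul_fromRows, transpose_zero, Matrix.zero_mul,
    Matrix.mul_zero, add_zero]

theorem transpose_fromRows_zero_mulVec [Fintype d_r] [Fintype d_f]
    [NonUnitalNonAssocSemiring α] (F : Matrix d_f k α) (w : d_r ⊕ d_f → α) :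
    (fromRows 0 F)ᵀ *ᵥ w = Fᵀ *ᵥ (fun i => w (Sum.inr i)) := by
  ext j
  simp [mulVec, dotProduct, Fintype.sum_sum_type]

theorem fromCols_mul_fromRows_zero_one [Fintype n] [Fintype k] [DecidableEq k] [Semiring α]
    (A : Matrix m n α) (B : Matrix m k α) :
    fromCols A B * fromRows (0 : Matrix n k α) (1 : Matrix k k α) = B := by
  rw [fromCols_mul_fromRows, Matrix.mul_zero, Matrix.mul_one, zero_add]

end Matrix

theorem regularized_unlearning_loss_distinct_general
    (d_r d_f n_r n_f n_t : ℕ)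
    (R : Matrix (Fin d_r) (Fin n_r) ℝ) (F : Matrix (Fin d_f) (Fin n_f) ℝ)
    (X_r : Matrix (Fin d_r ⊕ Fin d_f) (Fin n_r) ℝ) (hXr : X_r = Matrix.fromRows R 0)
    (X_f : Matrix (Fin d_r ⊕ Fin d_f) (Fin n_f) ℝ) (hXf : X_f = Matrix.fromRows 0 F)
    (X : Matrix (Fin d_r ⊕ Fin d_f) (Fin n_r ⊕ Fin n_f) ℝ) (hX : X = Matrix.fromCols X_r X_f)
    (hXinv : IsUnit (Xᵀ * X))
    (wr wf : Fin d_r ⊕ Fin d_f → ℝ)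
    (hwr : ∀ i, wr (Sum.inr i) = 0)
    (wstar : Fin d_r ⊕ Fin d_f → ℝ) (hws : wstar = wr + wf)
    (y_f : Fin n_f → ℝ) (hyf : y_f = X_fᵀ *ᵥ wstar)
    (S : Matrix (Fin n_r) (Fin n_t) ℝ)
    (X_t : Matrix (Fin d_r ⊕ Fin d_f) (Fin n_t) ℝ) (hXt : X_t = X_r * S)
    (P P_t : Matrix (Fin d_r ⊕ Fin d_f) (Fin d_r ⊕ Fin d_f) ℝ)
    (hP : P = X * (Xᵀ * X)⁻¹ * Xᵀ)
    (hPt : P_t = X_t * (X_tᵀ * X_t)⁻¹ * X_tᵀ)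
    (hatw_o hatw_t : Fin d_r ⊕ Fin d_f → ℝ)
    (hhato : hatw_o = P *ᵥ wr)
    (hhatt : hatw_t = (1 - P_t) *ᵥ hatw_o + P_t *ᵥ wr) :
    (1 / (n_f : ℝ)) * ((X_fᵀ *ᵥ hatw_t - y_f) ⬝ᵥ (X_fᵀ *ᵥ hatw_t - y_f)) =
      (1 / (n_f : ℝ)) * (wf ⬝ᵥ ((X_f * X_fᵀ) *ᵥ wf)) := by
  have hfwr : X_fᵀ *ᵥ wr = 0 := by
    rw [hXf, transpose_fromRows_zero_mulVec, funext hwr]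
    exact mulVec_zero _
  have hfP : X_fᵀ * P = X_fᵀ := by
    rw [hP]
    exact transpose_mul_projection_of_eq_mul hXinv
      (hX ▸ (fromCols_mul_fromRows_zero_one X_r X_f).symm)
  have hfPt : X_fᵀ * P_t = 0 := by
    refine hPt ▸ transpose_mul_mul_mul_transpose_eq_zero ?_ _
    rw [hXt, ← Matrix.mul_assoc, hXf, hXr, transpose_fromRows_zero_mul_fromRows_zero,
      Matrix.zero_mul]
  have hpred : X_fᵀ *ᵥ hatw_t = 0 := by
    rw [hhatt, hhato, transpose_mulVec_regularized_finetune hfP hfPt, hfwr]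
  have hyf' : y_f = X_fᵀ *ᵥ wf := by
    rw [hyf, hws, mulVec_add, hfwr, zero_add]
  rw [hpred, hyf', zero_sub, neg_dotProduct_neg, mulVec_transpose_dotProduct_self]

/-- regularized_unlearning_loss_distinct -/
theorem regularized_unlearning_loss_distinct
    (d_r d_f n_r n_f n_t : ℕ)
    (hd_r : 0 < d_r) (hd_f : 0 < d_f) (hn_r : 0 < n_r) (hn_f : 0 < n_f) (hn_t : 0 < n_t)
    (R : Matrix (Fin d_r) (Fin n_r) ℝ) (F : Matrix (Fin d_f) (Fin n_f) ℝ)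
    (hR : IsUnit (Rᵀ * R)) (hF : IsUnit (Fᵀ * F))
    (X_r : Matrix (Fin d_r ⊕ Fin d_f) (Fin n_r) ℝ) (hXr : X_r = Matrix.fromRows R 0)
    (X_f : Matrix (Fin d_r ⊕ Fin d_f) (Fin n_f) ℝ) (hXf : X_f = Matrix.fromRows 0 F)
    (X : Matrix (Fin d_r ⊕ Fin d_f) (Fin n_r ⊕ Fin n_f) ℝ) (hX : X = Matrix.fromCols X_r X_f)
    (hXinv : IsUnit (Xᵀ * X))
    (wr wf : Fin d_r ⊕ Fin d_f → ℝ)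
    (hwr : ∀ i, wr (Sum.inr i) = 0) (hwf : ∀ i, wf (Sum.inl i) = 0)
    (wstar : Fin d_r ⊕ Fin d_f → ℝ) (hws : wstar = wr + wf)
    (y_r : Fin n_r → ℝ) (hyr : y_r = X_rᵀ *ᵥ wstar)
    (y_f : Fin n_f → ℝ) (hyf : y_f = X_fᵀ *ᵥ wstar)
    (S : Matrix (Fin n_r) (Fin n_t) ℝ)
    (X_t : Matrix (Fin d_r ⊕ Fin d_f) (Fin n_t) ℝ) (hXt : X_t = X_r * S)
    (hXtinv : IsUnit (X_tᵀ * X_t))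
    (P P_r P_t : Matrix (Fin d_r ⊕ Fin d_f) (Fin d_r ⊕ Fin d_f) ℝ)
    (hP : P = X * (Xᵀ * X)⁻¹ * Xᵀ)
    (hPr : P_r = X_r * (X_rᵀ * X_r)⁻¹ * X_rᵀ)
    (hPt : P_t = X_t * (X_tᵀ * X_t)⁻¹ * X_tᵀ)
    (hatw_o hatw_t : Fin d_r ⊕ Fin d_f → ℝ)
    (hhato : hatw_o = P *ᵥ wr)
    (hhatt : hatw_t = (1 - P_t) *ᵥ hatw_o + P_t *ᵥ wr) :
    (1 / (n_f : ℝ)) * ((X_fᵀ *ᵥ hatw_t - y_f) ⬝ᵥ (X_fᵀ *ᵥ hatw_t - y_f)) =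
      (1 / (n_f : ℝ)) * (wf ⬝ᵥ ((X_f * X_fᵀ) *ᵥ wf)) :=
  regularized_unlearning_loss_distinct_general d_r d_f n_r n_f n_t R F X_r hXr X_f hXf X hX hXinv wr
    wf hwr wstar hws y_f hyf S X_t hXt P P_t hP hPt hatw_o hatw_t hhato hhatt
end

section
/- Theorem 4.1, overlapping-features scenario, Option A (retaining overlapping features): the regularized fine-tuned model ŵ_t satisfies L(ŵ_t, D_r) = 0 and L(ŵ_t, D_f) = ‖P w_*^r + P w_*^lap − (w_*^f + w_*^lap)‖²_{(1/n_f)·X_f X_fᵀ}, i.e., (1/n_f)·‖X_fᵀ ŵ_t − y_f‖₂² = (1/n_f)·vᵀ X_f X_fᵀ v with v = P(w_*^r + w_*^lap) − (w_*^f + w_*^lap). -/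
/-!
The fine-tuning data lie in the column space of `X_r`, which lies in that of `X`. Hence
`X_rᵀ P = X_rᵀ`, the residual `u - P u` of `u = w_*^r + w_*^lap` is orthogonal to the columns of
`X_r` and `X_t`, and `P_t` kills it, so the regularized model is just `ŵ_t = P u`. The supports
give `y_r = X_rᵀ u` and `y_f = X_fᵀ (w_*^f + w_*^lap)`, so the remaining loss vanishes and the
forgetting residual is `X_fᵀ (P u - (w_*^f + w_*^lap))`.
-/

open Matrix

namespace Matrix

variable {m n k R : Type*} [Fintype m]

theorem transpose_mul_mul_nonsing_inv_mul_transpose_of_mul_eq [Fintype n] [DecidableEq n]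
    [CommRing R] {X : Matrix m n R} (hX : IsUnit (Xᵀ * X)) {E : Matrix n k R} {Y : Matrix m k R}
    (hY : X * E = Y) : Yᵀ * (X * (Xᵀ * X)⁻¹ * Xᵀ) = Yᵀ := by
  rw [← hY, transpose_mul, Matrix.mul_assoc, ← Matrix.mul_assoc Xᵀ, ← Matrix.mul_assoc Xᵀ,
    mul_nonsing_inv _ ((isUnit_iff_isUnit_det _).mp hX), Matrix.one_mul]

theorem transpose_mulVec_eq_zero_of_forall_eq_zero_or [NonUnitalNonAssocSemiring R]
    {X : Matrix m n R} {w : m → R} (h : ∀ i, w i = 0 ∨ X i = 0) : Xᵀ *ᵥ w = 0 := by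
  funext j
  refine Finset.sum_eq_zero fun i _ => ?_
  rcases h i with hw | hX
  · simp [hw]
  · simp [hX]

theorem transpose_mulVec_dotProduct_self [Fintype n] [CommSemiring R] (A : Matrix m n R)
    (v : m → R) : (Aᵀ *ᵥ v) ⬝ᵥ (Aᵀ *ᵥ v) = v ⬝ᵥ ((A * Aᵀ) *ᵥ v) := by
  rw [← mulVec_mulVec, dotProduct_mulVec, vecMul_transpose, dotProduct_comm]

end Matrix

theorem regularized_optionA_overlap_general
    (d_r d_lap d_f n_r n_f n_t : ℕ)
    (R : Matrix (Fin d_r) (Fin n_r) ℝ) (L1 : Matrix (Fin d_lap) (Fin n_r) ℝ)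
    (L2 : Matrix (Fin d_lap) (Fin n_f) ℝ) (F : Matrix (Fin d_f) (Fin n_f) ℝ)
    (X_r : Matrix (Fin d_r ⊕ (Fin d_lap ⊕ Fin d_f)) (Fin n_r) ℝ)
    (hXr : X_r = Matrix.fromRows R (Matrix.fromRows L1 0))
    (X_f : Matrix (Fin d_r ⊕ (Fin d_lap ⊕ Fin d_f)) (Fin n_f) ℝ)
    (hXf : X_f = Matrix.fromRows 0 (Matrix.fromRows L2 F))
    (X : Matrix (Fin d_r ⊕ (Fin d_lap ⊕ Fin d_f)) (Fin n_r ⊕ Fin n_f) ℝ)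
    (hX : X = Matrix.fromCols X_r X_f)
    (hXinv : IsUnit (Xᵀ * X))
    (wr wl wf : Fin d_r ⊕ (Fin d_lap ⊕ Fin d_f) → ℝ)
    (hwr : ∀ i, wr (Sum.inr i) = 0)
    (hwf1 : ∀ i, wf (Sum.inl i) = 0) (hwf2 : ∀ i, wf (Sum.inr (Sum.inl i)) = 0)
    (wstar : Fin d_r ⊕ (Fin d_lap ⊕ Fin d_f) → ℝ) (hws : wstar = wr + wl + wf)
    (y_r : Fin n_r → ℝ) (hyr : y_r = X_rᵀ *ᵥ wstar)
    (y_f : Fin n_f → ℝ) (hyf : y_f = X_fᵀ *ᵥ wstar)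
    (S : Matrix (Fin n_r) (Fin n_t) ℝ)
    (X_t : Matrix (Fin d_r ⊕ (Fin d_lap ⊕ Fin d_f)) (Fin n_t) ℝ) (hXt : X_t = X_r * S)
    (P P_t : Matrix (Fin d_r ⊕ (Fin d_lap ⊕ Fin d_f)) (Fin d_r ⊕ (Fin d_lap ⊕ Fin d_f)) ℝ)
    (hP : P = X * (Xᵀ * X)⁻¹ * Xᵀ)
    (hPt : P_t = X_t * (X_tᵀ * X_t)⁻¹ * X_tᵀ)
    (hatw_o hatw_t : Fin d_r ⊕ (Fin d_lap ⊕ Fin d_f) → ℝ)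
    (hhato : hatw_o = P *ᵥ (wr + wl))
    (hhatt : hatw_t = (1 - P_t) *ᵥ hatw_o + P_t *ᵥ (wr + wl)) :
    ((1 / (n_r : ℝ)) * ((X_rᵀ *ᵥ hatw_t - y_r) ⬝ᵥ (X_rᵀ *ᵥ hatw_t - y_r)) = 0) ∧
      (1 / (n_f : ℝ)) * ((X_fᵀ *ᵥ hatw_t - y_f) ⬝ᵥ (X_fᵀ *ᵥ hatw_t - y_f)) =
        (1 / (n_f : ℝ)) *
          ((P *ᵥ (wr + wl) - (wf + wl)) ⬝ᵥ ((X_f * X_fᵀ) *ᵥ (P *ᵥ (wr + wl) - (wf + wl)))) := by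
  set u := wr + wl
  have hXrP : X_rᵀ * P = X_rᵀ := by
    rw [hP]
    refine transpose_mul_mul_nonsing_inv_mul_transpose_of_mul_eq hXinv
      (E := fromRows (1 : Matrix (Fin n_r) (Fin n_r) ℝ) 0) ?_
    rw [hX, fromCols_mul_fromRows, Matrix.mul_one, Matrix.mul_zero, add_zero]
  have hXr_res : X_rᵀ *ᵥ (u - P *ᵥ u) = 0 := by
    rw [mulVec_sub, mulVec_mulVec, hXrP, sub_self]
  have hXt_res : X_tᵀ *ᵥ (u - P *ᵥ u) = 0 := by
    rw [hXt, transpose_mul, ← mulVec_mulVec, hXr_res, mulVec_zero]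
  have hPt_res : P_t *ᵥ (u - P *ᵥ u) = 0 := by
    rw [hPt, ← mulVec_mulVec, hXt_res, mulVec_zero]
  have hwt : hatw_t = P *ᵥ u := by
    calc hatw_t = P *ᵥ u + P_t *ᵥ (u - P *ᵥ u) := by
          rw [hhatt, hhato, sub_mulVec, one_mulVec, mulVec_sub]; abel
      _ = P *ᵥ u := by rw [hPt_res, add_zero]
  have hXr_wf : X_rᵀ *ᵥ wf = 0 :=
    transpose_mulVec_eq_zero_of_forall_eq_zero_or fun
      | .inl i => .inl (hwf1 i)
      | .inr (.inl i) => .inl (hwf2 i)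
      | .inr (.inr _) => .inr (by ext; simp [hXr])
  have hXf_wr : X_fᵀ *ᵥ wr = 0 :=
    transpose_mulVec_eq_zero_of_forall_eq_zero_or fun
      | .inl _ => .inr (by ext; simp [hXf])
      | .inr i => .inl (hwr i)
  have hyr_u : y_r = X_rᵀ *ᵥ u := by rw [hyr, hws, mulVec_add, hXr_wf, add_zero]
  have hyf_eq : y_f = X_fᵀ *ᵥ (wf + wl) := by
    rw [hyf, hws, show wr + wl + wf = wf + wl + wr by abel, mulVec_add, hXf_wr, add_zero]
  constructor
  · rw [hwt, hyr_u, mulVec_mulVec, hXrP, sub_self, dotProduct_zero, mul_zero]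
  · rw [hwt, hyf_eq, ← mulVec_sub, transpose_mulVec_dotProduct_self]

/-- regularized_optionA_overlap -/
theorem regularized_optionA_overlap
    (d_r d_lap d_f n_r n_f n_t : ℕ)
    (hd_r : 0 < d_r) (hd_lap : 0 < d_lap) (hd_f : 0 < d_f)
    (hn_r : 0 < n_r) (hn_f : 0 < n_f) (hn_t : 0 < n_t)
    (R : Matrix (Fin d_r) (Fin n_r) ℝ) (L1 : Matrix (Fin d_lap) (Fin n_r) ℝ)
    (L2 : Matrix (Fin d_lap) (Fin n_f) ℝ) (F : Matrix (Fin d_f) (Fin n_f) ℝ)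
    (X_r : Matrix (Fin d_r ⊕ (Fin d_lap ⊕ Fin d_f)) (Fin n_r) ℝ)
    (hXr : X_r = Matrix.fromRows R (Matrix.fromRows L1 0))
    (X_f : Matrix (Fin d_r ⊕ (Fin d_lap ⊕ Fin d_f)) (Fin n_f) ℝ)
    (hXf : X_f = Matrix.fromRows 0 (Matrix.fromRows L2 F))
    (X : Matrix (Fin d_r ⊕ (Fin d_lap ⊕ Fin d_f)) (Fin n_r ⊕ Fin n_f) ℝ)
    (hX : X = Matrix.fromCols X_r X_f)
    (hXinv : IsUnit (Xᵀ * X)) (hXrinv : IsUnit (X_rᵀ * X_r)) (hXfinv : IsUnit (X_fᵀ * X_f))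
    (wr wl wf : Fin d_r ⊕ (Fin d_lap ⊕ Fin d_f) → ℝ)
    (hwr : ∀ i, wr (Sum.inr i) = 0)
    (hwl1 : ∀ i, wl (Sum.inl i) = 0) (hwl2 : ∀ i, wl (Sum.inr (Sum.inr i)) = 0)
    (hwf1 : ∀ i, wf (Sum.inl i) = 0) (hwf2 : ∀ i, wf (Sum.inr (Sum.inl i)) = 0)
    (wstar : Fin d_r ⊕ (Fin d_lap ⊕ Fin d_f) → ℝ) (hws : wstar = wr + wl + wf)
    (y_r : Fin n_r → ℝ) (hyr : y_r = X_rᵀ *ᵥ wstar)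
    (y_f : Fin n_f → ℝ) (hyf : y_f = X_fᵀ *ᵥ wstar)
    (S : Matrix (Fin n_r) (Fin n_t) ℝ)
    (X_t : Matrix (Fin d_r ⊕ (Fin d_lap ⊕ Fin d_f)) (Fin n_t) ℝ) (hXt : X_t = X_r * S)
    (hXtinv : IsUnit (X_tᵀ * X_t))
    (P P_r P_t : Matrix (Fin d_r ⊕ (Fin d_lap ⊕ Fin d_f)) (Fin d_r ⊕ (Fin d_lap ⊕ Fin d_f)) ℝ)
    (hP : P = X * (Xᵀ * X)⁻¹ * Xᵀ)
    (hPr : P_r = X_r * (X_rᵀ * X_r)⁻¹ * X_rᵀ)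
    (hPt : P_t = X_t * (X_tᵀ * X_t)⁻¹ * X_tᵀ)
    (hatw_o hatw_t : Fin d_r ⊕ (Fin d_lap ⊕ Fin d_f) → ℝ)
    (hhato : hatw_o = P *ᵥ (wr + wl))
    (hhatt : hatw_t = (1 - P_t) *ᵥ hatw_o + P_t *ᵥ (wr + wl)) :
    ((1 / (n_r : ℝ)) * ((X_rᵀ *ᵥ hatw_t - y_r) ⬝ᵥ (X_rᵀ *ᵥ hatw_t - y_r)) = 0) ∧
      (1 / (n_f : ℝ)) * ((X_fᵀ *ᵥ hatw_t - y_f) ⬝ᵥ (X_fᵀ *ᵥ hatw_t - y_f)) =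
        (1 / (n_f : ℝ)) *
          ((P *ᵥ (wr + wl) - (wf + wl)) ⬝ᵥ ((X_f * X_fᵀ) *ᵥ (P *ᵥ (wr + wl) - (wf + wl)))) :=
  regularized_optionA_overlap_general d_r d_lap d_f n_r n_f n_t R L1 L2 F X_r hXr X_f hXf X hX hXinv
    wr wl wf hwr hwf1 hwf2 wstar hws y_r hyr y_f hyf S X_t hXt P P_t hP hPt hatw_o hatw_t hhato
    hhatt
end
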